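/- Let u be a necklace of length n with 2·rank(u) ≤ n and let x be a representative of u; every unmatched position of x carries a 0. Let y be the word obtained from x by changing every unmatched position to 1, and let v be the necklace of y. Then rank(v) = n − rank(u) (so 2·rank(v) ≥ n), the matched pairs of y equal those of x, the unmatched positions of y are exactly the changed positions (all carrying 1), and changing all unmatched positions of y back to 0 recovers x. Consequently, if w is the Lyndon rearrangement of y with m = rank(v) − rank(u) unmatched positions, then u = necklace of w_m. -/

import Mathlib

/-!
Common definitions: binary words of length `n`, rotations, necklaces (the quotient
poset `Bₙ/Cₙ`), the cyclic matching procedure, Lyndon words, the map `φ`,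
crossing pairs, and the words `w_t`.

Throughout, a binary word of length `n` is a function `Fin n → Bool`, where `true`
encodes the letter `1` and `false` the letter `0`.
-/

/-- A binary word of length `n`: `true` encodes the letter `1`, `false` the letter `0`. -/
abbrev Word (n : ℕ) := Fin n → Bool

variable {n : ℕ} [NeZero n]

/-- The rotation `σ_i`, shifting the letters of `w` cyclically by `i` positions (so the
letter at position `j` of `w` appears at position `j + i` of `rot i w`). -/
def rot (i : Fin n) (w : Word n) : Word n := fun j => w (j - i)

lemma rot_rot (i j : Fin n) (w : Word n) : rot i (rot j w) = rot (j + i) w := by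
  funext k
  simp [rot, sub_sub, add_comm]

/-- Two words are equivalent when one is a cyclic rotation of the other. -/
def rotSetoid (n : ℕ) [NeZero n] : Setoid (Word n) where
  r w w' := ∃ i : Fin n, rot i w = w'
  iseqv := by
    refine ⟨fun w => ⟨0, ?_⟩, ?_, ?_⟩
    · funext j; simp [rot]
    · rintro w w' ⟨i, rfl⟩
      refine ⟨-i, ?_⟩
      rw [rot_rot]
      funext j; simp [rot]
    · rintro w w' w'' ⟨i, rfl⟩ ⟨j, rfl⟩
      exact ⟨i + j, (rot_rot j i w).symm⟩

/-- A necklace: an equivalence class of binary words under cyclic rotation. -/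
abbrev Necklace (n : ℕ) [NeZero n] := Quotient (rotSetoid n)

/-- The necklace of a word. -/
def nec (w : Word n) : Necklace n := Quotient.mk (rotSetoid n) w

/-- The number of `1`s in a word. -/
def wt (w : Word n) : ℕ := (Finset.univ.filter fun i => w i = true).card

/-- The number of `0`s in a word. -/
def zeros (w : Word n) : ℕ := (Finset.univ.filter fun i => w i = false).card

/-- The rank of a necklace: the number of `1`s in any representative. -/
noncomputable def rank (u : Necklace n) : ℕ := wt (Quotient.out u)

/-- The set of positions belonging to some pair of `M`. -/
def matchedPos (M : Finset (Fin n × Fin n)) : Finset (Fin n) :=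
  M.image Prod.fst ∪ M.image Prod.snd

/-- `j` is the first position outside `S` encountered strictly after `i` in the cyclic
order `i+1, i+2, …` (indices mod `n`). -/
def FirstAfter (S : Finset (Fin n)) (i j : Fin n) : Prop :=
  j ∉ S ∧ j ≠ i ∧ ∀ k : Fin n, k ∉ S → k ≠ i → (j - i).val ≤ (k - i).val

/-- One step of the cyclic matching procedure on the word `w`: choose an as-yet-unmatched
position `i` carrying the letter `0` such that the first as-yet-unmatched position `j`
after `i` in cyclic order carries the letter `1`, and declare `{i, j}` a matched pair
(recorded as the ordered pair `(i, j)`, the `0`-position first). -/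
inductive MatchStep (w : Word n) :
    Finset (Fin n × Fin n) → Finset (Fin n × Fin n) → Prop
  | step {M : Finset (Fin n × Fin n)} {i j : Fin n}
      (hi : i ∉ matchedPos M) (hw : w i = false)
      (hj : FirstAfter (matchedPos M) i j) (hj1 : w j = true) :
      MatchStep w M (insert (i, j) M)

/-- A maximal execution of the cyclic matching procedure on `w`, starting from the empty
matching: `M` is reachable from `∅` by matching steps and no further step is possible. -/
def IsMaximalMatching (w : Word n) (M : Finset (Fin n × Fin n)) : Prop :=
  Relation.ReflTransGen (MatchStep w) ∅ M ∧ ∀ M', ¬ MatchStep w M M'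

/-- The cyclic matching of `w`: the set of matched pairs produced by (any) maximal
execution of the cyclic matching procedure. -/
noncomputable def matching (w : Word n) : Finset (Fin n × Fin n) :=
  letI := Classical.dec (∃ M, IsMaximalMatching w M)
  if h : ∃ M, IsMaximalMatching w M then h.choose else ∅

/-- The unmatched positions of `w`: positions belonging to no matched pair. -/
noncomputable def unmatchedPos (w : Word n) : Finset (Fin n) :=
  Finset.univ \ matchedPos (matching w)

/-- Lexicographic comparison of words with respect to the letter order `1 ≺ 0`
(recall `true` encodes `1` and `false` encodes `0`). -/
def lexLE (w w' : Word n) : Prop :=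
  w = w' ∨ ∃ i : Fin n, (∀ j : Fin n, j < i → w j = w' j) ∧ w i = true ∧ w' i = false

/-- A word is Lyndon if it is lexicographically smallest among all of its rotations,
with respect to the letter order `1 ≺ 0`. -/
def IsLyndon (w : Word n) : Prop := ∀ i : Fin n, lexLE w (rot i w)

/-- The Lyndon rearrangement of `w`: its lexicographically smallest rotation. -/
noncomputable def lyndonOf (w : Word n) : Word n :=
  letI := Classical.dec (∃ i : Fin n, IsLyndon (rot i w))
  if h : ∃ i : Fin n, IsLyndon (rot i w) then rot h.choose w else w

/-- Change the letter at the rightmost unmatched position of `w` to `0`. -/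
noncomputable def flipTop (w : Word n) : Word n :=
  if h : (unmatchedPos w).Nonempty then
    Function.update w ((unmatchedPos w).max' h) false
  else w

/-- The map `φ`: take the Lyndon rearrangement of a representative and change the letter
at its rightmost unmatched position (which carries a `1` on the upper half of ranks)
to `0`. -/
noncomputable def phi (u : Necklace n) : Necklace n :=
  nec (flipTop (lyndonOf (Quotient.out u)))

/-- `x` lies strictly inside the cyclic arc running from `i` (exclusive) to `k`
(exclusive), in the cyclic order of positions. -/
def StrictBtw (i x k : Fin n) : Prop :=
  0 < (x - i).val ∧ (x - i).val < (k - i).val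

/-- The pairs `{i, k}` and `{j, l}` cross: exactly one of `j, l` lies strictly inside one
of the two cyclic arcs determined by `i` and `k`. -/
def Crosses (i k j l : Fin n) : Prop := Xor' (StrictBtw i j k) (StrictBtw i l k)

/-- `wT w t` is the word obtained from `w` by changing the letters at the last `t`
unmatched positions of `w` to `0`; that is, if the unmatched positions of `w` are
`p₁ < … < p_m`, the positions `p_{m-t+1}, …, p_m` are changed to `0`. -/
noncomputable def wT (w : Word n) (t : ℕ) : Word n := fun j =>
  if j ∈ unmatchedPos w ∧ ((unmatchedPos w).filter fun k => j ≤ k).card ≤ t then false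
  else w j

/-- The order on necklaces (the poset `Bₙ/Cₙ`): `u ≤ v` iff there are representatives
`w` of `u` and `w'` of `v` such that every position carrying `1` in `w` also carries `1`
in `w'`. -/
def nle (u v : Necklace n) : Prop :=
  ∃ w w' : Word n, nec w = u ∧ nec w' = v ∧ ∀ i, w i = true → w' i = true

/-- The strict order on necklaces. -/
def nlt (u v : Necklace n) : Prop := nle u v ∧ u ≠ v

/-- `v` covers `u` in `Bₙ/Cₙ`: `u < v` and there is no `z` with `u < z < v`. -/
def ncovBy (u v : Necklace n) : Prop := nlt u v ∧ ∀ z, nlt u z → ¬ nlt z v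

/-- A chain top: a necklace `v` in the upper half of ranks (`2·rank v ≥ n`) which is not
the image under `φ` of any necklace in the strict upper half of ranks. -/
def IsChainTop (v : Necklace n) : Prop :=
  n ≤ 2 * rank v ∧ ∀ u : Necklace n, n < 2 * rank u → phi u ≠ v

/-- The `φ`-string below the chain top `v`: the necklaces of the words `w_t`,
`0 ≤ t ≤ m`, where `w` is the Lyndon representative of `v` and `m = 2·rank v − n`. -/
noncomputable def chainOf (v : Necklace n) : Set (Necklace n) :=
  { u | ∃ t ≤ 2 * rank v - n, u = nec (wT (lyndonOf (Quotient.out v)) t) }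


/-! The matching procedure is confluent (a diamond argument), so `matching w` is the result of
every maximal run. A run of `w` stays a run for any word agreeing with `w` on the positions it
matches; for the word `y` of the theorem it is moreover maximal, since every unmatched position
of `y` carries `1` and a step must start at an unmatched `0`. Below half rank every unmatched
position of `x` carries `0`: an unmatched `0` and an unmatched `1` always allow a further step,
and unmatched positions carrying only `1`s would force `2 · wt x > n`. The rest is counting
(a run matching `k` pairs covers `2k` positions, `k` of them `1`s) and the equivariance of the
matching under rotation. -/

open Finset Relation

omit [NeZero n]

section Matching

variable {w w' : Word n} {M M' : Finset (Fin n × Fin n)} {S T : Finset (Fin n)}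
  {i j i' j' : Fin n}

lemma matchedPos_insert (p : Fin n × Fin n) (M : Finset (Fin n × Fin n)) :
    matchedPos (insert p M) = insert p.1 (insert p.2 (matchedPos M)) := by
  rw [matchedPos, image_insert, image_insert, insert_union, union_insert]
  rfl

lemma matchedPos_mono (h : M ⊆ M') : matchedPos M ⊆ matchedPos M' :=
  union_subset_union (image_subset_image h) (image_subset_image h)

lemma matchedPos_image_prodMap (i : Fin n) (M : Finset (Fin n × Fin n)) :
    matchedPos (M.image (Prod.map (· + i) (· + i))) = (matchedPos M).image (· + i) := by
  simp only [matchedPos, image_union, image_image]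
  rfl

lemma FirstAfter.mono (h : FirstAfter S i j) (hST : S ⊆ T) (hj : j ∉ T) :
    FirstAfter T i j :=
  ⟨hj, h.2.1, fun k hk hki => h.2.2 k (fun hkS => hk (hST hkS)) hki⟩

lemma MatchStep.eq_insert (h : MatchStep w M M') :
    ∃ i j, i ∉ matchedPos M ∧ w i = false ∧ FirstAfter (matchedPos M) i j ∧ w j = true ∧
      M' = insert (i, j) M := by
  cases h with
  | step hi hw hj hj1 => exact ⟨_, _, hi, hw, hj, hj1, rfl⟩

lemma MatchStep.subset (h : MatchStep w M M') : M ⊆ M' := by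
  cases h
  exact subset_insert _ _

lemma MatchStep.card (h : MatchStep w M M') : #M' = #M + 1 := by
  cases h with
  | @step i j hi _ _ _ =>
    exact card_insert_of_notMem fun hM => hi (mem_union_left _ (mem_image_of_mem _ hM))

lemma MatchStep.card_matchedPos (h : MatchStep w M M') :
    #(matchedPos M') = #(matchedPos M) + 2 := by
  cases h with
  | @step i j hi hwi hj hj1 =>
    have hij : i ≠ j := by rintro rfl; simp [hwi] at hj1
    rw [matchedPos_insert, card_insert_of_notMem (by simp [hij, hi]),
      card_insert_of_notMem hj.1]

lemma MatchStep.card_filter_matchedPos (h : MatchStep w M M') :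
    #{p ∈ matchedPos M' | w p = true} = #{p ∈ matchedPos M | w p = true} + 1 := by
  cases h with
  | @step i j hi hwi hj hj1 =>
    rw [matchedPos_insert, filter_insert, filter_insert, if_neg (by simp [hwi]), if_pos hj1,
      card_insert_of_notMem fun hm => hj.1 (mem_filter.mp hm).1]

lemma MatchStep.insert_insert (hi : i ∉ matchedPos M) (hwi : w i = false)
    (hj : FirstAfter (matchedPos M) i j) (hj1 : w j = true)
    (hi' : i ≠ i') (hij' : i ≠ j') (hji' : j ≠ i') (hjj' : j ≠ j') :
    MatchStep w (insert (i', j') M) (insert (i, j) (insert (i', j') M)) := by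
  have hsub : matchedPos M ⊆ matchedPos (insert (i', j') M) :=
    matchedPos_mono (subset_insert _ _)
  refine .step ?_ hwi (hj.mono hsub ?_) hj1 <;> simp only [matchedPos_insert, mem_insert, not_or]
  exacts [⟨hi', hij', hi⟩, ⟨hji', hjj', hj.1⟩]

lemma MatchStep.subset_of_reflTransGen (h : ReflTransGen (MatchStep w) M M') : M ⊆ M' := by
  induction h with
  | refl => exact subset_rfl
  | tail _ hstep ih => exact ih.trans hstep.subset

lemma MatchStep.reflTransGen_of_eqOn (h : ReflTransGen (MatchStep w) M M')
    (hagree : ∀ p ∈ matchedPos M', w' p = w p) : ReflTransGen (MatchStep w') M M' := by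
  induction h using ReflTransGen.head_induction_on with
  | refl => exact .refl
  | head hstep hrest ih =>
    refine .head ?_ ih
    obtain ⟨i, j, hi, hwi, hj, hj1, rfl⟩ := hstep.eq_insert
    have hsub := matchedPos_mono (MatchStep.subset_of_reflTransGen hrest)
    rw [matchedPos_insert] at hsub
    exact .step hi (by rwa [hagree i (hsub (by simp))]) hj
      (by rwa [hagree j (hsub (by simp))])

lemma exists_isMaximalMatching_of_reachable {N : Finset (Fin n × Fin n)}
    (hN : ReflTransGen (MatchStep w) ∅ N) : ∃ M, IsMaximalMatching w M := by
  by_cases hs : ∃ M', MatchStep w N M'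
  · obtain ⟨M', hM'⟩ := hs
    exact exists_isMaximalMatching_of_reachable (hN.tail hM')
  · exact ⟨N, hN, fun M' h => hs ⟨M', h⟩⟩
termination_by n - #(matchedPos N)
decreasing_by
  have := hM'.card_matchedPos
  have := card_le_univ (matchedPos M')
  simp only [Fintype.card_fin] at this
  omega

lemma matching_isMaximal (w : Word n) : IsMaximalMatching w (matching w) := by
  rw [matching, dif_pos (exists_isMaximalMatching_of_reachable .refl)]
  exact Exists.choose_spec _

lemma card_matchedPos_of_reachable (h : ReflTransGen (MatchStep w) ∅ M) :
    #(matchedPos M) = 2 * #M := by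
  induction h with
  | refl => rfl
  | tail _ hstep ih => rw [hstep.card_matchedPos, hstep.card, ih]; ring

lemma card_filter_matchedPos_of_reachable (h : ReflTransGen (MatchStep w) ∅ M) :
    #{p ∈ matchedPos M | w p = true} = #M := by
  induction h with
  | refl => rfl
  | tail _ hstep ih => rw [hstep.card_filter_matchedPos, hstep.card, ih]

lemma card_unmatchedPos (w : Word n) : #(unmatchedPos w) = n - 2 * #(matching w) := by
  rw [unmatchedPos, card_sdiff_of_subset (subset_univ _), card_univ, Fintype.card_fin,
    card_matchedPos_of_reachable (matching_isMaximal w).1]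

lemma wt_eq_card_matching_add (w : Word n) :
    wt w = #(matching w) + #{p ∈ unmatchedPos w | w p = true} := by
  rw [wt, ← union_sdiff_of_subset (subset_univ (matchedPos (matching w))), filter_union,
    card_union_of_disjoint (disjoint_filter_filter disjoint_sdiff),
    card_filter_matchedPos_of_reachable (matching_isMaximal w).1, unmatchedPos]

end Matching

section CyclicOrder

variable [NeZero n] {w : Word n} {M M₁ M₂ M' : Finset (Fin n × Fin n)} {S : Finset (Fin n)}
  {i j i' j' p q : Fin n}

lemma Fin.val_sub_of_val_sub_le {a b c : Fin n} (h : (b - a).val ≤ (c - a).val) :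
    (c - b).val = (c - a).val - (b - a).val := by
  rw [← sub_sub_sub_cancel_right c b a]
  exact Fin.sub_val_of_le h

lemma Fin.val_sub_of_val_sub_lt {a b c : Fin n} (h : (c - a).val < (b - a).val) :
    (c - b).val = n + (c - a).val - (b - a).val := by
  rw [← sub_sub_sub_cancel_right c b a]
  exact Fin.coe_sub_iff_lt.mpr h

lemma Fin.val_sub_pos_of_ne {a b : Fin n} (h : a ≠ b) : 0 < (a - b).val := by
  rw [Nat.pos_iff_ne_zero, Fin.val_ne_zero_iff]
  exact sub_ne_zero.mpr h

lemma FirstAfter.eq (h : FirstAfter S i j) (h' : FirstAfter S i j') : j = j' :=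
  sub_left_inj.mp (Fin.ext (le_antisymm (h.2.2 j' h'.1 h'.2.1) (h'.2.2 j h.1 h.2.1)))

/-- Going round the circle from `i`, the position `i'` would come after `j`, and then from `i'`
one meets `i` before `j`. -/
lemma FirstAfter.eq_left (hi : i ∉ S) (hi' : i' ∉ S) (hji' : j ≠ i')
    (h : FirstAfter S i j) (h' : FirstAfter S i' j) : i = i' := by
  by_contra hii'
  have hle : (j - i).val ≤ (i' - i).val := h.2.2 i' hi' (Ne.symm hii')
  have hne : (j - i).val ≠ (i' - i).val := fun e => hji' (sub_left_inj.mp (Fin.ext e))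
  have hji := Fin.val_sub_pos_of_ne h.2.1
  have hj := Fin.val_sub_of_val_sub_lt (c := j) (lt_of_le_of_ne hle hne)
  have hi'i := Fin.val_sub_of_val_sub_lt (c := i) (b := i') (a := i)
    (by simpa using Fin.val_sub_pos_of_ne (Ne.symm hii'))
  have := h'.2.2 i hi hii'
  simp only [sub_self, Fin.val_zero] at hi'i
  omega

/-- Starting from the free `0` closest before the free `1` at `q`, the first free position after
it cannot be a `0` (that `0` would be closer to `q`), so it is a `1` and a step is possible. -/
lemma exists_matchStep_of_free (hp : p ∉ matchedPos M) (hp0 : w p = false)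
    (hq : q ∉ matchedPos M) (hq1 : w q = true) : ∃ M', MatchStep w M M' := by
  obtain ⟨i, hiF, himin⟩ := exists_min_image {k ∈ univ \ matchedPos M | w k = false}
    (fun k => (q - k).val) ⟨p, by simp [hp, hp0]⟩
  simp only [mem_filter, mem_sdiff, mem_univ, true_and] at hiF
  have hiq : i ≠ q := by rintro rfl; simp [hiF.2] at hq1
  obtain ⟨j, hjF, hjmin⟩ := exists_min_image ((univ \ matchedPos M).erase i)
    (fun k => (k - i).val) ⟨q, by simp [Ne.symm hiq, hq]⟩
  simp only [mem_erase, mem_sdiff, mem_univ, true_and] at hjF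
  have hFA : FirstAfter (matchedPos M) i j :=
    ⟨hjF.2, hjF.1, fun k hk hki => hjmin k (by simp [hki, hk])⟩
  refine ⟨_, .step hiF.1 hiF.2 hFA ?_⟩
  by_contra hj0
  rw [Bool.not_eq_true] at hj0
  have hjq : j ≠ q := by rintro rfl; simp [hj0] at hq1
  have hle : (j - i).val ≤ (q - i).val := hjmin q (by simp [Ne.symm hiq, hq])
  have hne : (j - i).val ≠ (q - i).val := fun e => hjq (sub_left_inj.mp (Fin.ext e))
  have hpos := Fin.val_sub_pos_of_ne hjF.1
  have hqj := Fin.val_sub_of_val_sub_le hle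
  have := himin j (by simp [hjF.2, hj0])
  omega

lemma MatchStep.diamond (h₁ : MatchStep w M M₁) (h₂ : MatchStep w M M₂) :
    M₁ = M₂ ∨ ∃ D, MatchStep w M₁ D ∧ MatchStep w M₂ D := by
  obtain ⟨i, j, hi, hwi, hj, hj1, rfl⟩ := h₁.eq_insert
  obtain ⟨i', j', hi', hwi', hj', hj1', rfl⟩ := h₂.eq_insert
  by_cases hii' : i = i'
  · subst hii'
    rw [hj.eq hj']
    exact .inl rfl
  have hij' : i ≠ j' := by rintro rfl; simp [hwi] at hj1'
  have hji' : j ≠ i' := by rintro rfl; simp [hwi'] at hj1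
  have hjj' : j ≠ j' := by
    rintro rfl
    exact hii' (hj.eq_left hi hi' hji' hj')
  refine .inr ⟨insert (i, j) (insert (i', j') M), ?_,
    MatchStep.insert_insert hi hwi hj hj1 hii' hij' hji' hjj'⟩
  rw [Finset.insert_comm]
  exact MatchStep.insert_insert hi' hwi' hj' hj1' (Ne.symm hii') (Ne.symm hji') (Ne.symm hij')
    (Ne.symm hjj')

lemma IsMaximalMatching.unique (h : IsMaximalMatching w M) (h' : IsMaximalMatching w M') :
    M = M' := by
  have confluent : ∀ a b c, MatchStep w a b → MatchStep w a c →
      ∃ d, ReflGen (MatchStep w) b d ∧ ReflTransGen (MatchStep w) c d := by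
    intro a b c hab hac
    rcases hab.diamond hac with rfl | ⟨d, hbd, hcd⟩
    · exact ⟨b, .refl, .refl⟩
    · exact ⟨d, .single hbd, .single hcd⟩
  have normal : ∀ {N d}, IsMaximalMatching w N → ReflTransGen (MatchStep w) N d → N = d :=
    fun hN hNd => hNd.cases_head.resolve_right fun ⟨c, hc, _⟩ => hN.2 c hc
  obtain ⟨d, hMd, hM'd⟩ := church_rosser confluent h.1 h'.1
  rw [normal h hMd, normal h' hM'd]

lemma IsMaximalMatching.matching_eq (h : IsMaximalMatching w M) : matching w = M :=
  (matching_isMaximal w).unique h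

lemma eq_false_of_mem_unmatchedPos (hw : 2 * wt w ≤ n) (hq : q ∈ unmatchedPos w) :
    w q = false := by
  by_contra hq1
  rw [Bool.not_eq_false] at hq1
  have hmax := matching_isMaximal w
  have hfree : ∀ p ∈ unmatchedPos w, w p = true := by
    intro p hp
    by_contra hp0
    rw [Bool.not_eq_true] at hp0
    obtain ⟨M', hM'⟩ := exists_matchStep_of_free (mem_sdiff.mp hp).2 hp0 (mem_sdiff.mp hq).2 hq1
    exact hmax.2 M' hM'
  have hwt := wt_eq_card_matching_add w
  rw [filter_true_of_mem hfree, card_unmatchedPos] at hwt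
  have : 0 < #(unmatchedPos w) := card_pos.mpr ⟨q, hq⟩
  rw [card_unmatchedPos] at this
  omega

end CyclicOrder

noncomputable def fillUnmatched (w : Word n) : Word n :=
  fun j => if j ∈ unmatchedPos w then true else w j

noncomputable def clearUnmatched (w : Word n) : Word n :=
  fun j => if j ∈ unmatchedPos w then false else w j

section Fill

variable {w : Word n}

lemma matching_fillUnmatched [NeZero n] (w : Word n) :
    matching (fillUnmatched w) = matching w := by
  have hmax := matching_isMaximal w
  refine IsMaximalMatching.matching_eq
    ⟨MatchStep.reflTransGen_of_eqOn hmax.1 fun p hp => ?_, ?_⟩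
  · simp [fillUnmatched, unmatchedPos, hp]
  · rintro M' ⟨hi, hwi, -, -⟩
    simp [fillUnmatched, unmatchedPos, hi] at hwi

lemma unmatchedPos_fillUnmatched [NeZero n] (w : Word n) :
    unmatchedPos (fillUnmatched w) = unmatchedPos w := by
  rw [unmatchedPos, matching_fillUnmatched, unmatchedPos]

lemma clearUnmatched_fillUnmatched [NeZero n] (h : ∀ p ∈ unmatchedPos w, w p = false) :
    clearUnmatched (fillUnmatched w) = w := by
  funext j
  by_cases hj : j ∈ unmatchedPos w
  · simp [clearUnmatched, unmatchedPos_fillUnmatched, hj, h j hj]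
  · simp [clearUnmatched, fillUnmatched, unmatchedPos_fillUnmatched, hj]

lemma fillUnmatched_eq_true [NeZero n] {p : Fin n}
    (hp : p ∈ unmatchedPos (fillUnmatched w)) : fillUnmatched w p = true := by
  rw [unmatchedPos_fillUnmatched] at hp
  simp [fillUnmatched, hp]

lemma wt_fillUnmatched (h : ∀ p ∈ unmatchedPos w, w p = false) :
    wt (fillUnmatched w) = wt w + #(unmatchedPos w) := by
  have hdisj : Disjoint (unmatchedPos w) ({j | w j = true} : Finset (Fin n)) :=
    disjoint_left.mpr fun j hj hj1 => by simp [h j hj] at hj1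
  rw [wt, wt, add_comm, ← card_union_of_disjoint hdisj]
  congr 1
  ext j
  by_cases hj : j ∈ unmatchedPos w <;> simp [fillUnmatched, hj]

lemma wT_card_unmatchedPos (w : Word n) : wT w #(unmatchedPos w) = clearUnmatched w := by
  funext j
  simp only [wT, clearUnmatched, card_filter_le, and_true]

end Fill

section Rotation

variable [NeZero n] {w : Word n} {M M' : Finset (Fin n × Fin n)} {S : Finset (Fin n)}
  {a b : Fin n}

lemma rot_zero (w : Word n) : rot 0 w = w := by
  funext j
  simp [rot]

lemma rot_neg_rot (i : Fin n) (w : Word n) : rot (-i) (rot i w) = w := by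
  rw [rot_rot, add_neg_cancel, rot_zero]

lemma rot_apply_add (i c : Fin n) (w : Word n) : rot i w (c + i) = w c := by
  simp [rot]

lemma mem_image_add_right_iff {x i : Fin n} : x ∈ S.image (· + i) ↔ x - i ∈ S := by
  simp [sub_eq_add_neg]

lemma FirstAfter.image_add (h : FirstAfter S a b) (i : Fin n) :
    FirstAfter (S.image (· + i)) (a + i) (b + i) := by
  refine ⟨by simpa [mem_image_add_right_iff] using h.1, by simpa using h.2.1,
    fun k hk hki => ?_⟩
  have hle := h.2.2 (k - i) (by rwa [mem_image_add_right_iff] at hk)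
    (fun e => hki (by rw [← e, sub_add_cancel]))
  rwa [add_sub_add_right_eq_sub, add_comm a i, ← sub_sub]

lemma MatchStep.image_add (h : MatchStep w M M') (i : Fin n) :
    MatchStep (rot i w) (M.image (Prod.map (· + i) (· + i)))
      (M'.image (Prod.map (· + i) (· + i))) := by
  obtain ⟨a, b, ha, hwa, hb, hb1, rfl⟩ := h.eq_insert
  rw [image_insert]
  refine .step ?_ (by rwa [rot_apply_add])
    (by rw [matchedPos_image_prodMap]; exact hb.image_add i) (by rwa [rot_apply_add])
  simpa [matchedPos_image_prodMap, mem_image_add_right_iff] using ha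

lemma matching_rot (i : Fin n) (w : Word n) :
    matching (rot i w) = (matching w).image (Prod.map (· + i) (· + i)) := by
  have hmax := matching_isMaximal w
  refine IsMaximalMatching.matching_eq ⟨?_, fun N hN => ?_⟩
  · have hrun : ∀ {M M'}, ReflTransGen (MatchStep w) M M' →
        ReflTransGen (MatchStep (rot i w)) (M.image (Prod.map (· + i) (· + i)))
          (M'.image (Prod.map (· + i) (· + i))) := by
      intro M M' h
      induction h with
      | refl => exact .refl
      | tail _ hstep ih => exact ih.tail (hstep.image_add i)
    simpa using hrun hmax.1
  · have hback := hN.image_add (-i)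
    have hinv : Prod.map (· + -i) (· + -i) ∘ Prod.map (· + i) (· + i) = id := by
      funext p
      ext <;> simp
    rw [rot_neg_rot, image_image, hinv, image_id] at hback
    exact hmax.2 _ hback

lemma mem_unmatchedPos_rot {i j : Fin n} :
    j ∈ unmatchedPos (rot i w) ↔ j - i ∈ unmatchedPos w := by
  simp only [unmatchedPos, mem_sdiff, mem_univ, true_and, matching_rot, matchedPos_image_prodMap,
    mem_image_add_right_iff]

lemma card_unmatchedPos_rot (i : Fin n) (w : Word n) :
    #(unmatchedPos (rot i w)) = #(unmatchedPos w) := by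
  rw [card_unmatchedPos, card_unmatchedPos, matching_rot, card_image_of_injective _
    (Prod.map_injective.mpr ⟨add_left_injective i, add_left_injective i⟩)]

lemma clearUnmatched_rot (i : Fin n) (w : Word n) :
    clearUnmatched (rot i w) = rot i (clearUnmatched w) := by
  funext j
  simp only [clearUnmatched, rot, mem_unmatchedPos_rot]

lemma wt_rot (i : Fin n) (w : Word n) : wt (rot i w) = wt w := by
  rw [wt, wt, ← card_image_of_injective {j | w j = true} (add_left_injective i)]
  congr 1
  ext j
  rw [mem_image_add_right_iff]
  simp only [mem_filter, mem_univ, true_and]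
  rfl

lemma nec_rot (i : Fin n) (w : Word n) : nec (rot i w) = nec w :=
  Quotient.sound ⟨-i, rot_neg_rot i w⟩

lemma rank_nec (w : Word n) : rank (nec w) = wt w := by
  obtain ⟨i, hi⟩ := Quotient.exact (Quotient.out_eq (nec w))
  rw [rank, ← wt_rot i, hi]

lemma lyndonOf_eq_rot (w : Word n) : ∃ i, lyndonOf w = rot i w := by
  unfold lyndonOf
  split
  · exact ⟨_, rfl⟩
  · exact ⟨0, (rot_zero w).symm⟩

end Rotation

/-- Let `u` be a necklace with `2·rank u ≤ n` and `x` a representative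
of `u`; every unmatched position of `x` carries a `0`.  Let `y` be obtained from `x` by
changing every unmatched position to `1`, and let `v` be the necklace of `y`.  Then
`rank v = n − rank u` (so `2·rank v ≥ n`), the matched pairs of `y` equal those of `x`,
the unmatched positions of `y` are exactly the changed positions (all carrying `1`), and
changing all unmatched positions of `y` back to `0` recovers `x`.  Consequently, if `w`
is the Lyndon rearrangement of `y`, it has `m = rank v − rank u` unmatched positions and
`u` is the necklace of `w_m`. -/
theorem lower_half_fill (n : ℕ) [NeZero n] (u : Necklace n) (x : Word n)
    (hx : nec x = u) (hrk : 2 * rank u ≤ n)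
    (y : Word n)
    (hy : y = fun j => if j ∈ unmatchedPos x then true else x j) :
    (∀ p ∈ unmatchedPos x, x p = false) ∧
    rank (nec y) = n - rank u ∧
    n ≤ 2 * rank (nec y) ∧
    matching y = matching x ∧
    unmatchedPos y = unmatchedPos x ∧
    (∀ p ∈ unmatchedPos y, y p = true) ∧
    (fun j => if j ∈ unmatchedPos y then false else y j) = x ∧
    (unmatchedPos (lyndonOf y)).card = rank (nec y) - rank u ∧
    nec (wT (lyndonOf y) (rank (nec y) - rank u)) = u := by
  change y = fillUnmatched x at hy
  subst hx hy
  rw [rank_nec] at hrk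
  have hfree (p : Fin n) (hp : p ∈ unmatchedPos x) : x p = false :=
    eq_false_of_mem_unmatchedPos hrk hp
  have hwt : wt x = #(matching x) := by
    rw [wt_eq_card_matching_add, filter_false_of_mem fun p hp => by simp [hfree p hp], card_empty,
      add_zero]
  have hcard : #(unmatchedPos x) = n - 2 * wt x := by rw [card_unmatchedPos, hwt]
  have hwt_fill : wt (fillUnmatched x) = n - wt x := by rw [wt_fillUnmatched hfree]; omega
  obtain ⟨i, hi⟩ := lyndonOf_eq_rot (fillUnmatched x)
  have hcard_lyndon : #(unmatchedPos (lyndonOf (fillUnmatched x))) = n - wt x - wt x := by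
    rw [hi, card_unmatchedPos_rot, unmatchedPos_fillUnmatched, hcard]
    omega
  rw [rank_nec, rank_nec, hwt_fill]
  refine ⟨hfree, rfl, by omega, matching_fillUnmatched x, unmatchedPos_fillUnmatched x,
    fun _ => fillUnmatched_eq_true, clearUnmatched_fillUnmatched hfree, hcard_lyndon, ?_⟩
  rw [← hcard_lyndon, wT_card_unmatchedPos, hi, clearUnmatched_rot,
    clearUnmatched_fillUnmatched hfree, nec_rot]
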